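/- Let (z, z̄) be a primitive vanishing pair in H², i.e., z and z̄ are primitive elements of the degree-2 part H² of R_A with z·z̄ = 0 in R_A. Then there exist an index j ∈ {1,…,n}, a nonzero integer a, a sign ε ∈ {1,−1}, and an element u in the ℤ-span of x_1,…,x_{j−1} such that z = a x_j + u, z̄ = ε·(a(x_j − α_j) − u), and u·(u + a α_j) = 0 in R_A. -/

import Mathlib

/-!
For i < j, sending x_i ↦ 2s, x_j ↦ t + A^i_j s and every other x_k ↦ 0, with s² = t² = 0,
respects the relations of R_A and reads off the coefficient of x_i x_j; so
z = Σ c_m x_m and z̄ = Σ d_m x_m with z z̄ = 0 satisfy c_i d_j + c_j d_i + A^i_j c_j d_j = 0.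
Let j be the last index at which c or d is nonzero. The relations show that c_j divides every
d_j c_m, hence divides d_j · gcd(c) = d_j, and symmetrically; so d_j = ε c_j with ε = ±1 and
c_j ≠ 0. Solving the relations for the d_m gives z̄ = ε (c_j (x_j − α_j) − u) with
u = Σ_{m<j} c_m x_m, and expanding z z̄ = 0 with x_j² = α_j x_j leaves u (u + c_j α_j) = 0.
-/

open MvPolynomial

noncomputable section

def alphaP (n : ℕ) (A : Fin n → Fin n → ℤ) (j : Fin n) : MvPolynomial (Fin n) ℤ :=
  ∑ i ∈ Finset.univ.filter (· < j), C (A i j) * X i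

def bottIdeal (n : ℕ) (A : Fin n → Fin n → ℤ) : Ideal (MvPolynomial (Fin n) ℤ) :=
  Ideal.span (Set.range fun j => X j ^ 2 - alphaP n A j * X j)

abbrev BottRing (n : ℕ) (A : Fin n → Fin n → ℤ) : Type :=
  MvPolynomial (Fin n) ℤ ⧸ bottIdeal n A

/-- The image x_i of X i in R_A. -/
def bx (n : ℕ) (A : Fin n → Fin n → ℤ) (i : Fin n) : BottRing n A :=
  Ideal.Quotient.mk (bottIdeal n A) (X i)

/-- The image of α_j in R_A. -/
def balpha (n : ℕ) (A : Fin n → Fin n → ℤ) (j : Fin n) : BottRing n A :=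
  Ideal.Quotient.mk (bottIdeal n A) (alphaP n A j)

end

open Finset

section Coordinates

variable {ι : Type*} [LinearOrder ι]

theorem exists_last_ne_zero [Fintype ι] {M : Type*} [Zero M] {f : ι → M} (hf : f ≠ 0) :
    ∃ j, f j ≠ 0 ∧ ∀ m, j < m → f m = 0 := by
  classical
  obtain ⟨i, hi⟩ := Function.ne_iff.mp hf
  obtain ⟨j, hj, hmax⟩ := (univ.filter (f · ≠ 0)).exists_max_image id ⟨i, by simpa using hi⟩
  refine ⟨j, (mem_filter.mp hj).2, fun m hjm => ?_⟩
  by_contra hm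
  exact (hmax m (by simpa using hm)).not_gt hjm

theorem dvd_of_relation [Fintype ι] {c d b : ι → ℤ} {j : ι} (hc : univ.gcd c = 1)
    (htop : ∀ m, j < m → c m = 0)
    (hrel : ∀ m < j, c m * d j + c j * d m + b m * (c j * d j) = 0) : c j ∣ d j := by
  have hdvd : ∀ m ∈ univ, c j ∣ d j * c m := fun m _ => by
    rcases lt_trichotomy m j with hm | rfl | hm
    · exact ⟨-(d m + b m * d j), by linear_combination hrel m hm⟩
    · exact dvd_mul_left _ _
    · simp [htop m hm]
  simpa [Finset.gcd_mul_left, hc] using dvd_gcd hdvd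

theorem exists_sign_of_relation [Fintype ι] {c d b : ι → ℤ} {j : ι} (hc : univ.gcd c = 1)
    (hd : univ.gcd d = 1) (hj : c j ≠ 0 ∨ d j ≠ 0) (htop : ∀ m, j < m → c m = 0 ∧ d m = 0)
    (hrel : ∀ m < j, c m * d j + c j * d m + b m * (c j * d j) = 0) :
    c j ≠ 0 ∧ ∃ ε : ℤ, (ε = 1 ∨ ε = -1) ∧ d j = ε * c j := by
  have hcd := dvd_of_relation hc (fun m hm => (htop m hm).1) hrel
  have hdc := dvd_of_relation (d := c) (b := b) hd (fun m hm => (htop m hm).2)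
    fun m hm => by linear_combination hrel m hm
  refine ⟨fun h => ?_, ?_⟩
  · simp [h, zero_dvd_iff.mp (h ▸ hcd)] at hj
  · rcases Int.natAbs_eq_natAbs_iff.mp (Int.natAbs_eq_of_dvd_dvd hcd hdc) with h | h
    · exact ⟨1, .inl rfl, by simp [h]⟩
    · exact ⟨-1, .inr rfl, by simp [h]⟩

theorem eq_single_add_indicator_Iio {c : ι → ℤ} {j : ι} (htop : ∀ m, j < m → c m = 0) :
    c = Pi.single j (c j) + (Set.Iio j).indicator c := by
  ext m
  rcases lt_trichotomy m j with hm | rfl | hm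
  · simp [hm, hm.ne]
  · simp
  · simp [htop m hm, hm.ne', hm.not_gt]

theorem eq_sign_smul_of_relation {c d b : ι → ℤ} {j : ι} {ε : ℤ}
    (hcj : c j ≠ 0) (hdj : d j = ε * c j) (htop : ∀ m, j < m → d m = 0)
    (hrel : ∀ m < j, c m * d j + c j * d m + b m * (c j * d j) = 0) :
    d = ε • (Pi.single j (c j) - c j • (Set.Iio j).indicator b - (Set.Iio j).indicator c) := by
  ext m
  rcases lt_trichotomy m j with hm | rfl | hm
  · have h : c j * (d m + ε * (c m + b m * c j)) = 0 := by
      linear_combination hrel m hm - (c m + b m * c j) * hdj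
    simp [hm, hm.ne]
    linear_combination (mul_eq_zero.mp h).resolve_left hcj
  · simp [hdj]
  · simp [htop m hm, hm.ne', hm.not_gt]

end Coordinates

namespace BottRing

variable {n : ℕ} {A : Fin n → Fin n → ℤ}

theorem bx_mul_self (j : Fin n) : bx n A j * bx n A j = balpha n A j * bx n A j := by
  have h : Ideal.Quotient.mk (bottIdeal n A) (X j ^ 2 - alphaP n A j * X j) = 0 :=
    Ideal.Quotient.eq_zero_iff_mem.mpr (Ideal.subset_span ⟨j, rfl⟩)
  rwa [map_sub, map_mul, map_pow, sub_eq_zero, sq] at h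

theorem balpha_eq_linearCombination (j : Fin n) :
    balpha n A j = Fintype.linearCombination ℤ (bx n A) ((Set.Iio j).indicator (A · j)) := by
  simp only [balpha, alphaP, map_sum, Fintype.linearCombination_apply, Set.indicator_apply,
    Set.mem_Iio, ite_smul, zero_smul, ← Finset.sum_filter, bx]
  refine Finset.sum_congr rfl fun m _ => ?_
  rw [← smul_eq_C_mul, map_zsmul]

variable {S : Type*} [CommRing S]

theorem bottIdeal_le_ker_eval₂Hom (f : Fin n → S)
    (hf : ∀ k, f k * f k = (∑ m ∈ univ.filter (· < k), (A m k : S) * f m) * f k) :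
    bottIdeal n A ≤ RingHom.ker (eval₂Hom (Int.castRingHom S) f) := by
  refine Ideal.span_le.mpr ?_
  rintro _ ⟨k, rfl⟩
  simp only [SetLike.mem_coe, RingHom.mem_ker, alphaP, map_sub, map_mul, map_sum,
    eq_intCast, map_intCast, eval₂Hom_X', sq, hf k, sub_self]

noncomputable def lift (f : Fin n → S)
    (hf : ∀ k, f k * f k = (∑ m ∈ univ.filter (· < k), (A m k : S) * f m) * f k) :
    BottRing n A →+* S :=
  Ideal.Quotient.lift _ (eval₂Hom (Int.castRingHom S) f) fun _ hp =>
    RingHom.mem_ker.mp (bottIdeal_le_ker_eval₂Hom f hf hp)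

theorem lift_bx (f : Fin n → S)
    (hf : ∀ k, f k * f k = (∑ m ∈ univ.filter (· < k), (A m k : S) * f m) * f k) (k : Fin n) :
    lift f hf (bx n A k) = f k := by
  rw [lift, bx, Ideal.Quotient.lift_mk, eval₂Hom_X']

end BottRing

section DualNumbers

local notation "𝔻" => DualNumber (DualNumber ℤ)

def dualS : 𝔻 := TrivSqZeroExt.inl DualNumber.eps

def dualT : 𝔻 := DualNumber.eps

theorem dualS_mul_self : dualS * dualS = 0 := by
  rw [dualS, TrivSqZeroExt.inl_mul_inl, DualNumber.eps_mul_eps, TrivSqZeroExt.inl_zero]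

theorem dualT_mul_self : dualT * dualT = 0 := DualNumber.eps_mul_eps

theorem eq_zero_of_smul_dualS_mul_dualT_eq_zero {k : ℤ} (h : k • (dualS * dualT) = 0) :
    k = 0 := by
  simpa [dualS, dualT] using congrArg (fun x : 𝔻 => x.snd.snd) h

variable {n : ℕ} (A : Fin n → Fin n → ℤ) (i j : Fin n)

def testPoint : Fin n → 𝔻 :=
  fun m => if m = i then 2 * dualS else if m = j then dualT + (A i j : 𝔻) * dualS else 0

variable {A i j}

theorem testPoint_mul_self (hij : i < j) (k : Fin n) :
    testPoint A i j k * testPoint A i j k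
      = (∑ m ∈ univ.filter (· < k), (A m k : 𝔻) * testPoint A i j m) * testPoint A i j k := by
  have hzero : ∀ m, m ≠ i → m ≠ j → testPoint A i j m = 0 := fun m hi hj => by
    simp [testPoint, hi, hj]
  rcases eq_or_ne k i with rfl | hki
  · rw [sum_eq_zero fun m hm => by
      rw [hzero m (mem_filter.mp hm).2.ne ((mem_filter.mp hm).2.trans hij).ne, mul_zero]]
    simp only [testPoint, ↓reduceIte]
    linear_combination 4 * dualS_mul_self
  rcases eq_or_ne k j with rfl | hkj
  · rw [sum_eq_single_of_mem i (by simpa using hij) fun m hm hmi => by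
      rw [hzero m hmi (mem_filter.mp hm).2.ne, mul_zero]]
    simp only [testPoint, hki, ↓reduceIte]
    linear_combination dualT_mul_self - (A i k : 𝔻) ^ 2 * dualS_mul_self
  · simp [hzero k hki hkj]

theorem lift_testPoint_sum (hij : i < j) (e : Fin n → ℤ) :
    BottRing.lift (testPoint A i j) (testPoint_mul_self hij) (∑ m, e m • bx n A m)
      = e i * (2 * dualS) + e j * (dualT + (A i j : 𝔻) * dualS) := by
  rw [map_sum, ← sum_subset (subset_univ {i, j}) fun m _ hm => by
    simp only [mem_insert, mem_singleton, not_or] at hm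
    simp [BottRing.lift_bx, testPoint, hm.1, hm.2], sum_pair hij.ne]
  simp [BottRing.lift_bx, testPoint, hij.ne']

theorem coeff_relation_of_mul_eq_zero {c d : Fin n → ℤ}
    (hvan : (∑ m, c m • bx n A m) * (∑ m, d m • bx n A m) = 0) (hij : i < j) :
    c i * d j + c j * d i + A i j * (c j * d j) = 0 := by
  have h := congrArg (BottRing.lift (testPoint A i j) (testPoint_mul_self hij)) hvan
  rw [map_mul, lift_testPoint_sum hij, lift_testPoint_sum hij, map_zero] at h
  have h2 : (2 * (c i * d j + c j * d i + A i j * (c j * d j))) • (dualS * dualT) = 0 := by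
    rw [zsmul_eq_mul]
    push_cast
    linear_combination h - (4 * c i * d i + 2 * (c i * d j + c j * d i) * A i j
      + c j * d j * A i j ^ 2 : 𝔻) * dualS_mul_self - (c j * d j : 𝔻) * dualT_mul_self
  have := eq_zero_of_smul_dualS_mul_dualT_eq_zero h2
  omega

end DualNumbers

theorem mul_add_smul_eq_zero_of_mul_eq_zero {R : Type*} [CommRing R] {x α u : R} {a ε : ℤ}
    (hε : ε = 1 ∨ ε = -1) (hx : x * x = α * x)
    (h : (a • x + u) * (ε • (a • (x - α) - u)) = 0) : u * (u + a • α) = 0 := by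
  simp only [zsmul_eq_mul] at h ⊢
  rcases hε with rfl | rfl
  · linear_combination (a : R) ^ 2 * hx - h
  · linear_combination (a : R) ^ 2 * hx + h

theorem primitive_vanishing_pair (n : ℕ) (A : Fin n → Fin n → ℤ)
    (c d : Fin n → ℤ)
    (hc : Finset.univ.gcd c = 1) (hd : Finset.univ.gcd d = 1)
    (hvan : (∑ i, c i • bx n A i) * (∑ i, d i • bx n A i) = 0) :
    ∃ (j : Fin n) (a ε : ℤ) (u : Fin n → ℤ),
      a ≠ 0 ∧ (ε = 1 ∨ ε = -1) ∧ (∀ i, j ≤ i → u i = 0) ∧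
      (∑ i, c i • bx n A i) = a • bx n A j + ∑ i, u i • bx n A i ∧
      (∑ i, d i • bx n A i)
        = ε • (a • (bx n A j - balpha n A j) - ∑ i, u i • bx n A i) ∧
      (∑ i, u i • bx n A i) * ((∑ i, u i • bx n A i) + a • balpha n A j) = 0 := by
  have hcd : (fun m => (c m, d m)) ≠ 0 := fun h => by
    simp [gcd_eq_zero_iff.mpr fun m _ => congrArg Prod.fst (congrFun h m)] at hc
  obtain ⟨j, hj, htop⟩ := exists_last_ne_zero hcd
  replace htop m (hm : j < m) : c m = 0 ∧ d m = 0 := Prod.mk_eq_zero.mp (htop m hm)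
  have hrel : ∀ m < j, c m * d j + c j * d m + A m j * (c j * d j) = 0 :=
    fun m hm => coeff_relation_of_mul_eq_zero hvan hm
  obtain ⟨hcj, ε, hε, hdj⟩ :=
    exists_sign_of_relation hc hd (not_and_or.mp (mt Prod.mk_eq_zero.mpr hj)) htop hrel
  have hz := congrArg (Fintype.linearCombination ℤ (bx n A))
    (eq_single_add_indicator_Iio fun m hm => (htop m hm).1)
  have hz' := congrArg (Fintype.linearCombination ℤ (bx n A))
    (eq_sign_smul_of_relation hcj hdj (fun m hm => (htop m hm).2) hrel)
  simp only [map_add, map_sub, map_smul, Fintype.linearCombination_apply_single,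
    ← BottRing.balpha_eq_linearCombination, ← smul_sub] at hz hz'
  simp only [Fintype.linearCombination_apply] at hz hz'
  refine ⟨j, c j, ε, (Set.Iio j).indicator c, hcj, hε,
    fun i hi => Set.indicator_of_notMem (s := Set.Iio j) (not_lt.mpr hi) c, hz, hz', ?_⟩
  rw [hz, hz'] at hvan
  exact mul_add_smul_eq_zero_of_mul_eq_zero hε (BottRing.bx_mul_self j) hvan
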